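/- Let f be a transcendental entire function, let R0 > 0 be such that M(r, f) > r for all r ≥ R0, and let ε : [R0, ∞) → (0, 1) be a nonincreasing function such that ε(M^n(r, f)) ≥ ε(r)^{n+1} for all r ≥ R0 and all n ≥ 1. Then for every k > 0 there exists r* ≥ R0 such that for all r ≥ r* and all R ≥ r, log M(ε(r)R, f) / log(ε(r)R) > k. -/

import Mathlib

/-- The maximum modulus function `M(r, f) = max_{|z| = r} |f z|`. -/
noncomputable def maxMod (f : ℂ → ℂ) (r : ℝ) : ℝ :=
  sSup ((fun z => ‖f z‖) '' Metric.sphere (0 : ℂ) r)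

/-- `f` is a transcendental entire function: differentiable on all of `ℂ`
and not (the evaluation of) a polynomial. -/
def EntireTranscendental (f : ℂ → ℂ) : Prop :=
  Differentiable ℂ f ∧ ¬∃ p : Polynomial ℂ, ∀ z, f z = p.eval z

/-!
Cauchy's estimate at a nonzero Taylor coefficient of order `m > n` gives `r ^ n < M(r, f)` for
all large `r`, so `log M(r, f) / log r → ∞` and it suffices to show `ε(r) r → ∞`. Take `b` beyond
which `M(s, f) ≥ s²`: along the orbit `rₙ = Mⁿ(b, f)` the radii grow by squaring, whereas
`ε(rₙ₊₁) ≥ ε(b) ^ (n + 2)` decays only geometrically, so `ε(b) ^ n rₙ → ∞`. For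
`rₙ ≤ r < rₙ₊₁`, monotonicity of `ε` gives `ε(r) r ≥ ε(rₙ₊₁) rₙ ≥ ε(b) ^ (n + 2) rₙ`.
-/

open Filter Function Real

lemma norm_le_maxMod {f : ℂ → ℂ} (hf : Continuous f) {r : ℝ} {z : ℂ}
    (hz : z ∈ Metric.sphere (0 : ℂ) r) : ‖f z‖ ≤ maxMod f r :=
  le_csSup ((isCompact_sphere 0 r).image (continuous_norm.comp hf)).bddAbove ⟨z, hz, rfl⟩

lemma norm_iteratedDeriv_mul_pow_le_maxMod {f : ℂ → ℂ} (hf : Differentiable ℂ f) (m : ℕ)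
    {r : ℝ} (hr : 0 < r) : ‖iteratedDeriv m f 0‖ * r ^ m ≤ m.factorial * maxMod f r := by
  have := Complex.norm_iteratedDeriv_le_of_forall_mem_sphere_norm_le m hr hf.diffContOnCl
    fun z hz => norm_le_maxMod hf.continuous hz
  rwa [le_div_iff₀ (by positivity)] at this

namespace EntireTranscendental

variable {f : ℂ → ℂ}

lemma exists_iteratedDeriv_ne_zero (hf : EntireTranscendental f) (N : ℕ) :
    ∃ m, N ≤ m ∧ iteratedDeriv m f 0 ≠ 0 := by
  by_contra! h
  refine hf.2 ⟨∑ n ∈ Finset.range N,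
    Polynomial.C ((n.factorial : ℂ)⁻¹ * iteratedDeriv n f 0) * Polynomial.X ^ n, fun z => ?_⟩
  have htaylor := Complex.hasSum_taylorSeries_of_entire hf.1 0 z
  have hfinite : HasSum (fun n => (n.factorial : ℂ)⁻¹ • (z - 0) ^ n • iteratedDeriv n f 0)
      (∑ n ∈ Finset.range N, (n.factorial : ℂ)⁻¹ • (z - 0) ^ n • iteratedDeriv n f 0) :=
    hasSum_sum_of_ne_finset_zero fun n hn => by
      rw [h n (by simpa using hn), smul_zero, smul_zero]
  rw [htaylor.unique hfinite, Polynomial.eval_finsetSum]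
  simp [mul_comm, mul_left_comm]

lemma eventually_pow_lt_maxMod (hf : EntireTranscendental f) (n : ℕ) :
    ∀ᶠ r in atTop, r ^ n < maxMod f r := by
  obtain ⟨m, hnm, hm⟩ := hf.exists_iteratedDeriv_ne_zero (n + 1)
  set a := ‖iteratedDeriv m f 0‖ / m.factorial
  have ha : 0 < a := by positivity
  have hlarge : Tendsto (fun r : ℝ => a * r ^ (m - n)) atTop atTop :=
    (tendsto_pow_atTop (by omega)).const_mul_atTop ha
  filter_upwards [hlarge.eventually_gt_atTop 1, eventually_gt_atTop 0] with r hr1 hr0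
  calc r ^ n < a * r ^ (m - n) * r ^ n := lt_mul_of_one_lt_left (by positivity) hr1
    _ = ‖iteratedDeriv m f 0‖ * r ^ m / m.factorial := by
      rw [mul_assoc, ← pow_add, Nat.sub_add_cancel (by omega)]; ring
    _ ≤ maxMod f r := by
      rw [div_le_iff₀' (by positivity)]
      exact norm_iteratedDeriv_mul_pow_le_maxMod hf.1 m hr0

lemma eventually_lt_log_maxMod_div_log (hf : EntireTranscendental f) (k : ℝ) :
    ∀ᶠ r in atTop, k < log (maxMod f r) / log r := by
  filter_upwards [hf.eventually_pow_lt_maxMod ⌈k⌉₊, eventually_gt_atTop 1] with r hr hr1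
  rw [lt_div_iff₀ (log_pos hr1)]
  calc k * log r ≤ ⌈k⌉₊ * log r := by gcongr; exacts [(log_pos hr1).le, Nat.le_ceil k]
    _ = log (r ^ ⌈k⌉₊) := (log_pow _ _).symm
    _ < log (maxMod f r) := log_lt_log (by positivity) hr

end EntireTranscendental

section SquaringOrbit

variable {g : ℝ → ℝ} {b : ℝ}

lemma le_iterate_of_sq_le (hb : 1 ≤ b) (hg : ∀ s ≥ b, s ^ 2 ≤ g s) (n : ℕ) : b ≤ g^[n] b := by
  induction n with
  | zero => rfl
  | succ n ih =>
    rw [iterate_succ_apply']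
    calc b ≤ g^[n] b := ih
      _ ≤ (g^[n] b) ^ 2 := le_self_pow₀ (hb.trans ih) two_ne_zero
      _ ≤ g (g^[n] b) := hg _ ih

lemma sq_iterate_le_iterate_succ (hb : 1 ≤ b) (hg : ∀ s ≥ b, s ^ 2 ≤ g s) (n : ℕ) :
    (g^[n] b) ^ 2 ≤ g^[n + 1] b := by
  rw [iterate_succ_apply']
  exact hg _ (le_iterate_of_sq_le hb hg n)

lemma tendsto_iterate_atTop_of_sq_le (hb : 2 ≤ b) (hg : ∀ s ≥ b, s ^ 2 ≤ g s) :
    Tendsto (fun n => g^[n] b) atTop atTop := by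
  refine tendsto_atTop_of_geom_le (by simp only [iterate_zero, id]; linarith) one_lt_two
    fun n => ?_
  have h2 : 2 ≤ g^[n] b := le_iterate_of_sq_le (by linarith) hg n |>.trans' hb
  calc 2 * g^[n] b ≤ (g^[n] b) ^ 2 := by nlinarith
    _ ≤ g^[n + 1] b := sq_iterate_le_iterate_succ (by linarith) hg n

end SquaringOrbit

lemma tendsto_pow_mul_atTop_of_sq_le_succ {u : ℕ → ℝ} (hu : Tendsto u atTop atTop)
    (hsq : ∀ n, u n ^ 2 ≤ u (n + 1)) {c : ℝ} (hc : 0 < c) :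
    Tendsto (fun n => c ^ n * u n) atTop atTop := by
  obtain ⟨N, hN⟩ := eventually_atTop.1 (hu.eventually_ge_atTop (2 / c))
  have hcu : ∀ n ≥ N, 2 ≤ c * u n := fun n hn => (div_le_iff₀' hc).1 (hN n hn)
  have hpos : ∀ n ≥ N, 0 < c ^ n * u n := fun n hn =>
    mul_pos (pow_pos hc n) (pos_of_mul_pos_right ((hcu n hn).trans_lt' two_pos) hc.le)
  rw [← tendsto_add_atTop_iff_nat N]
  refine tendsto_atTop_of_geom_le (by simpa using hpos N le_rfl) one_lt_two fun n => ?_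
  have htwo := hcu (n + N) (Nat.le_add_left N n)
  have hnonneg := (hpos (n + N) (Nat.le_add_left N n)).le
  rw [show n + 1 + N = n + N + 1 by omega]
  calc 2 * (c ^ (n + N) * u (n + N)) ≤ (c * u (n + N)) * (c ^ (n + N) * u (n + N)) := by
        gcongr
    _ = c ^ (n + N + 1) * u (n + N) ^ 2 := by ring
    _ ≤ c ^ (n + N + 1) * u (n + N + 1) := by gcongr; exact hsq _

lemma Filter.Tendsto.exists_mem_Ico_of_le {α : Type*} [LinearOrder α] [NoMaxOrder α]
    {u : ℕ → α} (hu : Tendsto u atTop atTop) {N : ℕ} {x : α} (hx : u N ≤ x) :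
    ∃ n ≥ N, x ∈ Set.Ico (u n) (u (n + 1)) := by
  by_contra! h
  have hle : ∀ n ≥ N, u n ≤ x := fun n hn => by
    induction n, hn using Nat.le_induction with
    | base => exact hx
    | succ n hn ih => exact not_lt.1 (h n hn ∘ Set.mem_Ico.2 ∘ And.intro ih)
  obtain ⟨n, hn, hxn⟩ := ((eventually_ge_atTop N).and (hu.eventually_gt_atTop x)).exists
  exact (hle n hn).not_gt hxn

theorem tendsto_mul_self_atTop_of_pow_le_iterate {g ε : ℝ → ℝ} {R0 : ℝ}
    (hg : ∀ᶠ s in atTop, s ^ 2 ≤ g s) (hεpos : ∀ r ≥ R0, 0 < ε r)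
    (hεanti : AntitoneOn ε (Set.Ici R0))
    (hεg : ∀ r ≥ R0, ∀ n : ℕ, 1 ≤ n → ε r ^ (n + 1) ≤ ε (g^[n] r)) :
    Tendsto (fun r => ε r * r) atTop atTop := by
  obtain ⟨s0, hs0⟩ := eventually_atTop.1 hg
  set b := max s0 (max R0 2)
  have hb2 : 2 ≤ b := le_max_of_le_right (le_max_right _ _)
  have hR0b : R0 ≤ b := le_max_of_le_right (le_max_left _ _)
  have hgb : ∀ s ≥ b, s ^ 2 ≤ g s := fun s hs => hs0 s (le_of_max_le_left hs)
  set u := fun n => g^[n] b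
  set c := ε b
  have hu := tendsto_iterate_atTop_of_sq_le hb2 hgb
  have hcu := (tendsto_pow_mul_atTop_of_sq_le_succ hu
    (sq_iterate_le_iterate_succ (by linarith) hgb) (hεpos b hR0b)).const_mul_atTop
    (pow_pos (hεpos b hR0b) 2)
  refine tendsto_atTop.2 fun T => eventually_atTop.2 ?_
  obtain ⟨N, hN⟩ := eventually_atTop.1 (hcu.eventually_ge_atTop T)
  have hbu : ∀ n, b ≤ u n := le_iterate_of_sq_le (by linarith) hgb
  refine ⟨u N, fun r hr => ?_⟩
  obtain ⟨n, hnN, hun, hrun⟩ := hu.exists_mem_Ico_of_le hr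
  have hR0r : R0 ≤ r := hR0b.trans ((hbu n).trans hun)
  calc T ≤ c ^ 2 * (c ^ n * u n) := hN n hnN
    _ = c ^ (n + 1 + 1) * u n := by ring
    _ ≤ ε (u (n + 1)) * u n := by
      gcongr
      · linarith [hbu n]
      · exact hεg b hR0b (n + 1) le_add_self
    _ ≤ ε r * r := mul_le_mul (hεanti hR0r (hR0b.trans (hbu (n + 1))) hrun.le) hun
      (by linarith [hbu n]) (hεpos r hR0r).le

theorem simply_connected_fast_escaping_stmt2_general
    (f : ℂ → ℂ) (hf : EntireTranscendental f)
    (R0 : ℝ) (ε : ℝ → ℝ)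
    (hε01 : ∀ r ≥ R0, ε r ∈ Set.Ioo (0 : ℝ) 1)
    (hεmono : ∀ r s, R0 ≤ r → r ≤ s → ε s ≤ ε r)
    (hεM : ∀ r ≥ R0, ∀ n : ℕ, 1 ≤ n → ε r ^ (n + 1) ≤ ε ((maxMod f)^[n] r)) :
    ∀ k : ℝ, 0 < k → ∃ rstar : ℝ, R0 ≤ rstar ∧ ∀ r ≥ rstar, ∀ R ≥ r,
      k < Real.log (maxMod f (ε r * R)) / Real.log (ε r * R) := by
  intro k _
  have hεpos : ∀ r ≥ R0, 0 < ε r := fun r hr => (hε01 r hr).1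
  have hεr := tendsto_mul_self_atTop_of_pow_le_iterate
    ((hf.eventually_pow_lt_maxMod 2).mono fun _ h => h.le) hεpos
    (fun r hr s _ hrs => hεmono r s hr hrs) hεM
  obtain ⟨T, hT⟩ := eventually_atTop.1 (hf.eventually_lt_log_maxMod_div_log k)
  obtain ⟨a, ha⟩ := eventually_atTop.1 (tendsto_atTop.1 hεr T)
  refine ⟨max a R0, le_max_right _ _, fun r hr R hR => hT _ ?_⟩
  calc T ≤ ε r * r := ha r (le_of_max_le_left hr)
    _ ≤ ε r * R := by gcongr; exact (hεpos r (le_of_max_le_right hr)).le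

theorem simply_connected_fast_escaping_stmt2
    (f : ℂ → ℂ) (hf : EntireTranscendental f)
    (R0 : ℝ) (hR0 : 0 < R0) (hM : ∀ r ≥ R0, r < maxMod f r)
    (ε : ℝ → ℝ)
    (hε01 : ∀ r ≥ R0, ε r ∈ Set.Ioo (0 : ℝ) 1)
    (hεmono : ∀ r s, R0 ≤ r → r ≤ s → ε s ≤ ε r)
    (hεM : ∀ r ≥ R0, ∀ n : ℕ, 1 ≤ n → ε r ^ (n + 1) ≤ ε ((maxMod f)^[n] r)) :
    ∀ k : ℝ, 0 < k → ∃ rstar : ℝ, R0 ≤ rstar ∧ ∀ r ≥ rstar, ∀ R ≥ r,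
      k < Real.log (maxMod f (ε r * R)) / Real.log (ε r * R) :=
  simply_connected_fast_escaping_stmt2_general f hf R0 ε hε01 hεmono hεM
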